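/- Let n ≥ 1, λ ≥ 0, μ > 0 and C > 0 be real numbers, and define A σ = (1/(2μ))(σ − (λ/(nλ+2μ)) tr(σ) I) and dev σ = σ − (1/n) tr(σ) I for real n×n matrices σ. Then every real n×n matrix σ satisfying |tr σ| ≤ C ‖dev σ‖_F fulfills ⟨A σ, σ⟩ ≥ min{1/(8μ), 1/(8C²μ)} · ‖σ‖_F², where ⟨X,Y⟩ = tr(Xᵀ Y) is the Frobenius inner product and ‖·‖_F the Frobenius norm. -/

import Mathlib

open Matrix

/-- The Frobenius inner product `⟨X, Y⟩ = tr(Xᵀ Y)` on real `n×n` matrices. -/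
noncomputable def frobInner {n : ℕ} (X Y : Matrix (Fin n) (Fin n) ℝ) : ℝ :=
  Matrix.trace (Xᵀ * Y)

/-- The Frobenius norm on real `n×n` matrices. -/
noncomputable def frobNorm {n : ℕ} (X : Matrix (Fin n) (Fin n) ℝ) : ℝ :=
  Real.sqrt (frobInner X X)

/-- The compliance tensor of a homogeneous isotropic material with Lamé coefficients
`λ ≥ 0`, `μ > 0`: `A σ = (1/(2μ))(σ − (λ/(nλ+2μ)) tr(σ) I)`. -/
noncomputable def complianceA {n : ℕ} (lam mu : ℝ) (σ : Matrix (Fin n) (Fin n) ℝ) :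
    Matrix (Fin n) (Fin n) ℝ :=
  (1 / (2 * mu)) •
    (σ - (lam / ((n : ℝ) * lam + 2 * mu)) • Matrix.trace σ • (1 : Matrix (Fin n) (Fin n) ℝ))

/-- The deviatoric (trace-free) part `dev σ = σ − (1/n) tr(σ) I`. -/
noncomputable def devPart {n : ℕ} (σ : Matrix (Fin n) (Fin n) ℝ) :
    Matrix (Fin n) (Fin n) ℝ :=
  σ - (1 / (n : ℝ)) • Matrix.trace σ • (1 : Matrix (Fin n) (Fin n) ℝ)

/-
The compliance form is `⟨Aσ, σ⟩ = (‖σ‖² − λ/(nλ+2μ) (tr σ)²) / (2μ)`, while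
`‖σ‖² = ‖dev σ‖² + (tr σ)²/n`. Since `λ/(nλ+2μ) ≤ 1/n` for every `λ ≥ 0`, the form
dominates `‖dev σ‖²/(2μ)` uniformly in `λ`, and the trace control gives
`‖σ‖² ≤ (1 + C²) ‖dev σ‖²`.
-/

section Frobenius

variable {n : ℕ}

lemma frobInner_self_nonneg (X : Matrix (Fin n) (Fin n) ℝ) : 0 ≤ frobInner X X := by
  unfold frobInner
  refine Finset.sum_nonneg fun i _ => ?_
  simp only [diag_apply, mul_apply, transpose_apply]
  exact Finset.sum_nonneg fun j _ => mul_self_nonneg _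

lemma frobNorm_sq (X : Matrix (Fin n) (Fin n) ℝ) : frobNorm X ^ 2 = frobInner X X :=
  Real.sq_sqrt (frobInner_self_nonneg X)

lemma frobInner_devPart_self (σ : Matrix (Fin n) (Fin n) ℝ) :
    frobInner (devPart σ) (devPart σ) = frobInner σ σ - trace σ ^ 2 / n := by
  unfold frobInner devPart
  simp only [Matrix.sub_mul, Matrix.mul_sub, Matrix.smul_mul, Matrix.mul_smul, transpose_sub,
    transpose_smul, transpose_one, trace_sub, trace_smul, trace_one, trace_transpose,
    Matrix.one_mul, Matrix.mul_one, smul_eq_mul, Fintype.card_fin]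
  rcases eq_or_ne (n : ℝ) 0 with hn | hn
  · simp [hn]
  · field_simp
    ring

lemma frobInner_complianceA_self (lam mu : ℝ) (σ : Matrix (Fin n) (Fin n) ℝ) :
    frobInner (complianceA lam mu σ) σ =
      (frobInner σ σ - lam / (n * lam + 2 * mu) * trace σ ^ 2) / (2 * mu) := by
  unfold frobInner complianceA
  simp only [Matrix.sub_mul, Matrix.smul_mul, transpose_sub, transpose_smul, transpose_one,
    trace_sub, trace_smul, Matrix.one_mul, smul_eq_mul]
  ring

lemma frobInner_devPart_div_le_frobInner_complianceA (hn : 1 ≤ n) {lam mu : ℝ}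
    (hlam : 0 ≤ lam) (hmu : 0 < mu) (σ : Matrix (Fin n) (Fin n) ℝ) :
    frobInner (devPart σ) (devPart σ) / (2 * mu) ≤ frobInner (complianceA lam mu σ) σ := by
  have hn0 : (0 : ℝ) < n := by exact_mod_cast hn
  have hcoef : lam / (n * lam + 2 * mu) ≤ 1 / n := by
    rw [div_le_div_iff₀ (by positivity) hn0]
    linarith
  rw [frobInner_complianceA_self, frobInner_devPart_self]
  gcongr
  calc lam / (n * lam + 2 * mu) * trace σ ^ 2 ≤ 1 / n * trace σ ^ 2 := by gcongr
    _ = trace σ ^ 2 / n := one_div_mul_eq_div _ _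

lemma frobInner_self_le_of_abs_trace_le (hn : 1 ≤ n) {C : ℝ} {σ : Matrix (Fin n) (Fin n) ℝ}
    (htr : |trace σ| ≤ C * frobNorm (devPart σ)) :
    frobInner σ σ ≤ (1 + C ^ 2) * frobInner (devPart σ) (devPart σ) := by
  have htr_sq : trace σ ^ 2 ≤ C ^ 2 * frobInner (devPart σ) (devPart σ) := by
    simpa only [sq_abs, mul_pow, frobNorm_sq] using pow_le_pow_left₀ (abs_nonneg _) htr 2
  have hdiv : trace σ ^ 2 / n ≤ trace σ ^ 2 := div_le_self (sq_nonneg _) (by exact_mod_cast hn)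
  linarith [frobInner_devPart_self σ]

end Frobenius

lemma min_inv_eight_mul_one_add_sq_le {mu : ℝ} (hmu : 0 < mu) (C : ℝ) :
    min (1 / (8 * mu)) (1 / (8 * C ^ 2 * mu)) * (1 + C ^ 2) ≤ 1 / (2 * mu) := by
  set m := min (1 / (8 * mu)) (1 / (8 * C ^ 2 * mu))
  have hm_sq : m * C ^ 2 ≤ 1 / (8 * mu) := by
    rcases eq_or_ne C 0 with rfl | hC
    · rw [zero_pow two_ne_zero, mul_zero]
      positivity
    calc m * C ^ 2 ≤ 1 / (8 * C ^ 2 * mu) * C ^ 2 := by gcongr; exact min_le_right _ _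
      _ = 1 / (8 * mu) := by field_simp
  have hm : m ≤ 1 / (8 * mu) := min_le_left _ _
  calc m * (1 + C ^ 2) ≤ 1 / (8 * mu) + 1 / (8 * mu) := by linarith
    _ ≤ 1 / (2 * mu) := by field_simp; linarith

theorem complianceA_coercive_of_trace_control_general (n : ℕ) (hn : 1 ≤ n)
    (lam mu C : ℝ) (hlam : 0 ≤ lam) (hmu : 0 < mu)
    (σ : Matrix (Fin n) (Fin n) ℝ)
    (htr : |Matrix.trace σ| ≤ C * frobNorm (devPart σ)) :
    min (1 / (8 * mu)) (1 / (8 * C ^ 2 * mu)) * frobNorm σ ^ 2 ≤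
      frobInner (complianceA lam mu σ) σ := by
  set m := min (1 / (8 * mu)) (1 / (8 * C ^ 2 * mu))
  have hm : 0 ≤ m := le_min (by positivity) (by positivity)
  calc m * frobNorm σ ^ 2 ≤ m * ((1 + C ^ 2) * frobInner (devPart σ) (devPart σ)) := by
        rw [frobNorm_sq]
        exact mul_le_mul_of_nonneg_left (frobInner_self_le_of_abs_trace_le hn htr) hm
    _ ≤ 1 / (2 * mu) * frobInner (devPart σ) (devPart σ) := by
        rw [← mul_assoc]
        exact mul_le_mul_of_nonneg_right (min_inv_eight_mul_one_add_sq_le hmu C)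
          (frobInner_self_nonneg _)
    _ = frobInner (devPart σ) (devPart σ) / (2 * mu) := one_div_mul_eq_div _ _
    _ ≤ frobInner (complianceA lam mu σ) σ :=
        frobInner_devPart_div_le_frobInner_complianceA hn hlam hmu σ

/-- Coercivity with constant independent of `λ`: if `|tr σ| ≤ C ‖dev σ‖_F`, then
`⟨A σ, σ⟩ ≥ min{1/(8μ), 1/(8C²μ)} ‖σ‖_F²`. -/
theorem complianceA_coercive_of_trace_control (n : ℕ) (hn : 1 ≤ n)
    (lam mu C : ℝ) (hlam : 0 ≤ lam) (hmu : 0 < mu) (hC : 0 < C)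
    (σ : Matrix (Fin n) (Fin n) ℝ)
    (htr : |Matrix.trace σ| ≤ C * frobNorm (devPart σ)) :
    min (1 / (8 * mu)) (1 / (8 * C ^ 2 * mu)) * frobNorm σ ^ 2 ≤
      frobInner (complianceA lam mu σ) σ :=
  complianceA_coercive_of_trace_control_general n hn lam mu C hlam hmu σ htr
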